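/- Under the randomized Kaczmarz scheme, if λ_min ∈ (0,1), then e(n) → 0 almost surely; that is, the iterates x(n) converge almost surely to the unique solution x* of Ax = b with x* − x(0) orthogonal to the kernel of A. -/

import Mathlib

/-!
Write `v_i` for the normalized rows and `e(k) = x(k) - x*`. A Kaczmarz step replaces `e` by its
orthogonal projection `e - ⟪v_i, e⟫ v_i` onto `v_iᗮ`. Hence `‖e‖` never increases, `e` stays in
`(ker A)ᗮ`, which contains the rows and `e(0)`, and on `(ker A)ᗮ` averaging over the index gives
`∑ p_i ‖e - ⟪v_i, e⟫ v_i‖² = ‖e‖² - ∑ p_i ⟪v_i, e⟫² ≤ (1 - λ_min) ‖e‖²`.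
Since `e(k)` is a function of the history `(ξ_0, …, ξ_{k-1})`, whose law is the product of the
`p_i`, this yields `E ‖e(k)‖² ≤ (1 - λ_min)^k ‖e(0)‖² → 0`. The pathwise limit of the
nonincreasing sequence `‖e(k)‖²` is then a nonnegative variable with zero expectation, so
`e(k) → 0` almost surely.
-/

open scoped InnerProductSpace
open MeasureTheory

/-- The `i`-th row of a matrix, viewed as a vector of Euclidean space. -/
def Matrix.rowE {m n : ℕ} (A : Matrix (Fin m) (Fin n) ℝ) (i : Fin m) :
    EuclideanSpace ℝ (Fin n) := WithLp.toLp 2 (fun j => A i j)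

/-- The normalized `i`-th row of a matrix. -/
noncomputable def Matrix.nrowE {m n : ℕ} (A : Matrix (Fin m) (Fin n) ℝ) (i : Fin m) :
    EuclideanSpace ℝ (Fin n) := (‖A.rowE i‖)⁻¹ • A.rowE i

open scoped ENNReal
open Filter Topology ProbabilityTheory

section KaczmarzStep

variable {E : Type*} [NormedAddCommGroup E] [InnerProductSpace ℝ E]

noncomputable def kaczmarzStep (v e : E) : E := e - ⟪v, e⟫_ℝ • v

theorem norm_kaczmarzStep_sq {v : E} (hv : ‖v‖ = 1) (e : E) :
    ‖kaczmarzStep v e‖ ^ 2 = ‖e‖ ^ 2 - ⟪v, e⟫_ℝ ^ 2 := by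
  rw [kaczmarzStep, norm_sub_sq_real, real_inner_smul_right, norm_smul, real_inner_comm e v,
    Real.norm_eq_abs, hv, mul_one, sq_abs]
  ring

theorem kaczmarzStep_mem {K : Submodule ℝ E} {v e : E} (hv : v ∈ K) (he : e ∈ K) :
    kaczmarzStep v e ∈ K :=
  K.sub_mem he (K.smul_mem _ hv)

theorem norm_kaczmarzStep_le {v : E} (hv : ‖v‖ = 1) (e : E) : ‖kaczmarzStep v e‖ ≤ ‖e‖ := by
  have := norm_kaczmarzStep_sq hv e
  nlinarith [sq_nonneg ⟪v, e⟫_ℝ, norm_nonneg (kaczmarzStep v e), norm_nonneg e]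

theorem sum_mul_norm_kaczmarzStep_sq {ι : Type*} [Fintype ι] {v : ι → E} (hv : ∀ i, ‖v i‖ = 1)
    {p : ι → ℝ} (hp : ∑ i, p i = 1) (e : E) :
    ∑ i, p i * ‖kaczmarzStep (v i) e‖ ^ 2 = ‖e‖ ^ 2 - ∑ i, p i * ⟪v i, e⟫_ℝ ^ 2 := by
  simp only [norm_kaczmarzStep_sq (hv _), mul_sub, Finset.sum_sub_distrib, ← Finset.sum_mul, hp,
    one_mul]

theorem mul_norm_sq_le_of_forall_norm_eq_one {K : Submodule ℝ E} {Q : E → ℝ}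
    (hQ : ∀ (c : ℝ) (e : E), Q (c • e) = c ^ 2 * Q e) {r : ℝ}
    (hr : ∀ s ∈ K, ‖s‖ = 1 → r ≤ Q s) {e : E} (he : e ∈ K) :
    r * ‖e‖ ^ 2 ≤ Q e := by
  rcases eq_or_ne e 0 with rfl | hne
  · simpa using (hQ 0 0).ge
  have hnorm : ‖e‖ ≠ 0 := norm_ne_zero_iff.mpr hne
  have hunit := hr (‖e‖⁻¹ • e) (K.smul_mem _ he) (by simp [norm_smul, hnorm])
  rw [hQ] at hunit
  calc r * ‖e‖ ^ 2 ≤ (‖e‖⁻¹ ^ 2 * Q e) * ‖e‖ ^ 2 := by gcongr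
    _ = Q e := by field_simp

theorem sum_mul_norm_kaczmarzStep_sq_le {ι : Type*} [Fintype ι] {K : Submodule ℝ E} {v : ι → E}
    (hv : ∀ i, ‖v i‖ = 1) {p : ι → ℝ} (hp : ∑ i, p i = 1) {r : ℝ}
    (hr : ∀ s ∈ K, ‖s‖ = 1 → r ≤ ∑ i, p i * ⟪v i, s⟫_ℝ ^ 2) {e : E} (he : e ∈ K) :
    ∑ i, p i * ‖kaczmarzStep (v i) e‖ ^ 2 ≤ (1 - r) * ‖e‖ ^ 2 := by
  have hlower : r * ‖e‖ ^ 2 ≤ ∑ i, p i * ⟪v i, e⟫_ℝ ^ 2 := by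
    refine mul_norm_sq_le_of_forall_norm_eq_one (fun c e => ?_) hr he
    simp only [real_inner_smul_right, mul_pow, Finset.mul_sum]
    exact Finset.sum_congr rfl fun i _ => by ring
  rw [sum_mul_norm_kaczmarzStep_sq hv hp]
  linarith

end KaczmarzStep

section Trajectory

variable {ι α : Type*}

def trajectory (T : ι → α → α) (a : α) : (k : ℕ) → (Fin k → ι) → α
  | 0, _ => a
  | k + 1, t => T (t (Fin.last k)) (trajectory T a k (Fin.init t))

theorem trajectory_mem {T : ι → α → α} {S : Set α} (hS : ∀ i, Set.MapsTo (T i) S S) {a : α}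
    (ha : a ∈ S) : ∀ (k : ℕ) (t : Fin k → ι), trajectory T a k t ∈ S
  | 0, _ => ha
  | k + 1, t => hS _ (trajectory_mem hS ha k (Fin.init t))

theorem Fin.sum_pi_eq_sum_sum_snoc [Fintype ι] {M : Type*} [AddCommMonoid M] {k : ℕ}
    (f : (Fin (k + 1) → ι) → M) : ∑ t, f t = ∑ s : Fin k → ι, ∑ i, f (Fin.snoc s i) := by
  rw [← (Fin.snocEquiv fun _ => ι).sum_comp, Fintype.sum_prod_type, Finset.sum_comm]
  rfl

theorem sum_prod_mul_trajectory_le [Fintype ι] {T : ι → α → α} {S : Set α}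
    (hS : ∀ i, Set.MapsTo (T i) S S) {q : ι → ℝ≥0∞} {V : α → ℝ≥0∞} {c : ℝ≥0∞}
    (hV : ∀ b ∈ S, ∑ i, q i * V (T i b) ≤ c * V b) {a : α} (ha : a ∈ S) (k : ℕ) :
    ∑ t : Fin k → ι, (∏ j, q (t j)) * V (trajectory T a k t) ≤ c ^ k * V a := by
  induction k with
  | zero => simp [trajectory]
  | succ k ih =>
    calc ∑ t : Fin (k + 1) → ι, (∏ j, q (t j)) * V (trajectory T a (k + 1) t)
        = ∑ s : Fin k → ι, (∏ j, q (s j)) * ∑ i, q i * V (T i (trajectory T a k s)) := by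
          simp only [Fin.sum_pi_eq_sum_sum_snoc, Fin.prod_univ_castSucc, Fin.snoc_castSucc,
            Fin.snoc_last, trajectory, Fin.init_snoc, Finset.mul_sum, mul_assoc]
      _ ≤ ∑ s : Fin k → ι, (∏ j, q (s j)) * (c * V (trajectory T a k s)) := by
          gcongr with s
          exact hV _ (trajectory_mem hS ha k s)
      _ = c * ∑ s : Fin k → ι, (∏ j, q (s j)) * V (trajectory T a k s) := by
          rw [Finset.mul_sum]
          exact Finset.sum_congr rfl fun s _ => by ring
      _ ≤ c * (c ^ k * V a) := by gcongr
      _ = c ^ (k + 1) * V a := by ring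

end Trajectory

theorem ae_tendsto_zero_of_antitone_of_tendsto_lintegral {Ω : Type*} [MeasurableSpace Ω]
    {μ : Measure Ω} {f : ℕ → Ω → ℝ≥0∞} (hf : ∀ k, AEMeasurable (f k) μ)
    (hanti : ∀ ω, Antitone fun k => f k ω)
    (hint : Tendsto (fun k => ∫⁻ ω, f k ω ∂μ) atTop (𝓝 0)) :
    ∀ᵐ ω ∂μ, Tendsto (fun k => f k ω) atTop (𝓝 0) := by
  have hinf : ∫⁻ ω, ⨅ k, f k ω ∂μ = 0 :=
    le_antisymm (ge_of_tendsto' hint fun k => lintegral_mono fun ω => iInf_le _ k) bot_le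
  filter_upwards [(lintegral_eq_zero_iff' (AEMeasurable.iInf hf)).1 hinf] with ω hω
  simpa [hω] using tendsto_atTop_iInf (hanti ω)

section IndependentIndices

variable {Ω ι : Type*} [MeasurableSpace Ω] {μ : Measure Ω} [MeasurableSpace ι]
  [MeasurableSingletonClass ι] {ξ : ℕ → Ω → ι} {q : ι → ℝ≥0∞}

theorem ProbabilityTheory.iIndepFun.measure_history_eq_prod (hindep : iIndepFun ξ μ)
    (hdist : ∀ k i, μ {ω | ξ k ω = i} = q i) (k : ℕ) (t : Fin k → ι) :
    μ {ω | ∀ j : Fin k, ξ j ω = t j} = ∏ j : Fin k, q (t j) := by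
  have := (hindep.precomp (Fin.val_injective (n := k))).meas_iInter
    (s := fun j : Fin k => {ω | ξ j ω = t j}) fun j => ⟨{t j}, measurableSet_singleton _, rfl⟩
  simpa [Set.ofPred_forall, hdist] using this

theorem measurable_comp_history [Countable ι] (hmeas : ∀ k, Measurable (ξ k)) {k : ℕ} {β : Type*}
    [MeasurableSpace β] (φ : (Fin k → ι) → β) : Measurable fun ω => φ (fun j => ξ j ω) :=
  (Measurable.of_discrete (f := φ)).comp (measurable_pi_lambda _ fun j => hmeas j)

theorem ProbabilityTheory.iIndepFun.lintegral_comp_history_eq_sum [Fintype ι]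
    (hmeas : ∀ k, Measurable (ξ k)) (hindep : iIndepFun ξ μ)
    (hdist : ∀ k i, μ {ω | ξ k ω = i} = q i) {k : ℕ} (φ : (Fin k → ι) → ℝ≥0∞) :
    ∫⁻ ω, φ (fun j => ξ j ω) ∂μ = ∑ t, (∏ j, q (t j)) * φ t := by
  have hτ : Measurable fun ω (j : Fin k) => ξ j ω := measurable_pi_lambda _ fun j => hmeas j
  rw [← lintegral_map Measurable.of_discrete hτ, lintegral_fintype]
  refine Finset.sum_congr rfl fun t _ => ?_
  rw [Measure.map_apply hτ (measurableSet_singleton t), mul_comm]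
  congr
  rw [← hindep.measure_history_eq_prod hdist k t]
  congr
  ext ω
  simp [funext_iff]

theorem ProbabilityTheory.iIndepFun.ae_tendsto_lyapunov_zero {α : Type*} [Fintype ι]
    (hmeas : ∀ k, Measurable (ξ k)) (hindep : iIndepFun ξ μ)
    (hdist : ∀ k i, μ {ω | ξ k ω = i} = q i) {T : ι → α → α} {S : Set α}
    (hS : ∀ i, Set.MapsTo (T i) S S) {V : α → ℝ≥0∞} (hVT : ∀ i b, V (T i b) ≤ V b) {c : ℝ≥0∞}
    (hc : c < 1) (hV : ∀ b ∈ S, ∑ i, q i * V (T i b) ≤ c * V b) {a : α} (ha : a ∈ S)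
    (hVa : V a ≠ ∞) :
    ∀ᵐ ω ∂μ, Tendsto (fun k => V (trajectory T a k fun j => ξ j ω)) atTop (𝓝 0) := by
  have hgeom : Tendsto (fun k => c ^ k * V a) atTop (𝓝 0) := by
    simpa using ENNReal.Tendsto.mul_const (ENNReal.tendsto_pow_atTop_nhds_zero_of_lt_one hc)
      (Or.inr hVa)
  refine ae_tendsto_zero_of_antitone_of_tendsto_lintegral
    (fun k => (measurable_comp_history hmeas (V ∘ trajectory T a k)).aemeasurable)
    (fun ω => antitone_nat_of_succ_le fun k => hVT _ _) ?_
  exact tendsto_of_tendsto_of_tendsto_of_le_of_le tendsto_const_nhds hgeom (fun _ => bot_le)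
    fun k => (hindep.lintegral_comp_history_eq_sum hmeas hdist _).trans_le
      (sum_prod_mul_trajectory_le hS hV ha k)

end IndependentIndices

theorem tendsto_of_tendsto_ofReal_norm_sub_sq {E : Type*} [SeminormedAddCommGroup E]
    {u : ℕ → E} {a : E} (h : Tendsto (fun k => ENNReal.ofReal (‖u k - a‖ ^ 2)) atTop (𝓝 0)) :
    Tendsto u atTop (𝓝 a) := by
  have hsq := (ENNReal.tendsto_toReal ENNReal.zero_ne_top).comp h
  have hnorm := (Real.continuous_sqrt.tendsto 0).comp hsq
  simp only [Function.comp_def, ENNReal.toReal_ofReal (sq_nonneg _), Real.sqrt_sq (norm_nonneg _),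
    Real.sqrt_zero] at hnorm
  exact tendsto_iff_norm_sub_tendsto_zero.2 hnorm

namespace Matrix

variable {m n : ℕ} (A : Matrix (Fin m) (Fin n) ℝ)

theorem inner_rowE (i : Fin m) (x : EuclideanSpace ℝ (Fin n)) :
    ⟪A.rowE i, x⟫_ℝ = A.mulVec x i := by
  simp [PiLp.inner_apply, mulVec, dotProduct, rowE, mul_comm]

theorem norm_nrowE {i : Fin m} (hi : A.rowE i ≠ 0) : ‖A.nrowE i‖ = 1 := by
  rw [nrowE, norm_smul, norm_inv, norm_norm, inv_mul_cancel₀ (norm_ne_zero_iff.mpr hi)]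

theorem mem_orthogonal_ker_toEuclideanLin {e : EuclideanSpace ℝ (Fin n)} :
    e ∈ (LinearMap.ker (toEuclideanLin A))ᗮ ↔
      ∀ z : EuclideanSpace ℝ (Fin n), A.mulVec z = 0 → ⟪z, e⟫_ℝ = 0 := by
  simp [Submodule.mem_orthogonal, toLpLin_apply]

theorem nrowE_mem_orthogonal_ker (i : Fin m) : A.nrowE i ∈ (LinearMap.ker (toEuclideanLin A))ᗮ := by
  rw [mem_orthogonal_ker_toEuclideanLin]
  intro z hz
  rw [nrowE, real_inner_smul_right, real_inner_comm, inner_rowE, hz, Pi.zero_apply, mul_zero]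

theorem kaczmarz_update_sub_eq_kaczmarzStep {b : Fin m → ℝ} {xstar : EuclideanSpace ℝ (Fin n)}
    (hxstar : A.mulVec xstar = b) (i : Fin m) (x : EuclideanSpace ℝ (Fin n)) :
    x + ((b i - ⟪A.rowE i, x⟫_ℝ) / ‖A.rowE i‖ ^ 2) • A.rowE i - xstar =
      kaczmarzStep (A.nrowE i) (x - xstar) := by
  rw [kaczmarzStep, nrowE, real_inner_smul_left, smul_smul, inner_sub_right, ← hxstar,
    ← inner_rowE]
  module

end Matrix

theorem randomized_kaczmarz_almost_sure_convergence_general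
    (m n : ℕ) (A : Matrix (Fin m) (Fin n) ℝ) (b : Fin m → ℝ)
    (hrows : ∀ i, A.rowE i ≠ 0)
    (p : Fin m → ℝ) (hp : ∀ i, 0 < p i) (hpsum : ∑ i, p i = 1)
    (Ω : Type) [MeasurableSpace Ω] (μ : Measure Ω)
    (ξ : ℕ → Ω → Fin m) (hmeas : ∀ k, Measurable (ξ k))
    (hindep : ProbabilityTheory.iIndepFun ξ μ)
    (hdist : ∀ (k : ℕ) (i : Fin m), μ {ω | ξ k ω = i} = ENNReal.ofReal (p i))
    (x0 : EuclideanSpace ℝ (Fin n))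
    (X : ℕ → Ω → EuclideanSpace ℝ (Fin n))
    (hX0 : ∀ ω, X 0 ω = x0)
    (hXstep : ∀ (k : ℕ) (ω : Ω), X (k + 1) ω = X k ω +
      ((b (ξ k ω) - ⟪A.rowE (ξ k ω), X k ω⟫_ℝ) / ‖A.rowE (ξ k ω)‖ ^ 2) • A.rowE (ξ k ω))
    (xstar : EuclideanSpace ℝ (Fin n))
    (hxstar : A.mulVec xstar = b)
    (hxorth : ∀ z : EuclideanSpace ℝ (Fin n), A.mulVec z = 0 → ⟪z, xstar - x0⟫_ℝ = 0)
    (lammin : ℝ)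
    (hlam : IsLeast {r : ℝ | ∃ s : EuclideanSpace ℝ (Fin n), ‖s‖ = 1 ∧
      (∀ z : EuclideanSpace ℝ (Fin n), A.mulVec z = 0 → ⟪z, s⟫_ℝ = 0) ∧
      r = ∑ i, p i * ⟪A.nrowE i, s⟫_ℝ ^ 2} lammin)
    (hlam01 : lammin ∈ Set.Ioo (0 : ℝ) 1) :
    ∀ᵐ ω ∂μ, Filter.Tendsto (fun k => X k ω) Filter.atTop (nhds xstar) := by
  set K := (LinearMap.ker (Matrix.toEuclideanLin A))ᗮ
  set T : Fin m → EuclideanSpace ℝ (Fin n) → EuclideanSpace ℝ (Fin n) :=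
    fun i => kaczmarzStep (A.nrowE i)
  set V : EuclideanSpace ℝ (Fin n) → ℝ≥0∞ := fun e => ENNReal.ofReal (‖e‖ ^ 2)
  have hX : ∀ k ω, X k ω - xstar = trajectory T (x0 - xstar) k fun j => ξ j ω := by
    intro k ω
    induction k with
    | zero => rw [hX0]; rfl
    | succ k ih => rw [hXstep, A.kaczmarz_update_sub_eq_kaczmarzStep hxstar, ih]; rfl
  have he0 : x0 - xstar ∈ K := A.mem_orthogonal_ker_toEuclideanLin.2 fun z hz => by
    rw [← neg_sub, inner_neg_right, hxorth z hz, neg_zero]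
  have hTK : ∀ i, Set.MapsTo (T i) K K :=
    fun i e he => kaczmarzStep_mem (A.nrowE_mem_orthogonal_ker i) he
  have hVT : ∀ i e, V (T i e) ≤ V e := fun i e =>
    ENNReal.ofReal_le_ofReal (by gcongr; exact norm_kaczmarzStep_le (A.norm_nrowE (hrows i)) e)
  have hcontract : ∀ e ∈ K,
      ∑ i, ENNReal.ofReal (p i) * V (T i e) ≤ ENNReal.ofReal (1 - lammin) * V e := by
    intro e he
    have := sum_mul_norm_kaczmarzStep_sq_le (fun i => A.norm_nrowE (hrows i)) hpsum
      (fun s hs hs1 => hlam.2 ⟨s, hs1, A.mem_orthogonal_ker_toEuclideanLin.1 hs, rfl⟩) he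
    simp only [V, T, ← ENNReal.ofReal_mul (hp _).le, ← ENNReal.ofReal_mul' (sq_nonneg ‖e‖)]
    rw [← ENNReal.ofReal_sum_of_nonneg fun i _ => mul_nonneg (hp i).le (sq_nonneg _)]
    exact ENNReal.ofReal_le_ofReal this
  filter_upwards [hindep.ae_tendsto_lyapunov_zero hmeas hdist hTK hVT
    (ENNReal.ofReal_lt_one.2 (by linarith [hlam01.1])) hcontract he0 ENNReal.ofReal_ne_top]
    with ω hω
  exact tendsto_of_tendsto_ofReal_norm_sub_sq (by simpa only [hX] using hω)

/-- Almost sure convergence of the randomized Kaczmarz scheme: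
if `λ_min ∈ (0,1)`, then the iterates `x(n)` converge almost surely to the unique solution `x*` of `A x = b` with `x* - x(0)` orthogonal to the kernel of `A`. -/
theorem randomized_kaczmarz_almost_sure_convergence
    (m n : ℕ) (A : Matrix (Fin m) (Fin n) ℝ) (b : Fin m → ℝ)
    (hrows : ∀ i, A.rowE i ≠ 0)
    (hconsistent : ∃ x : EuclideanSpace ℝ (Fin n), A.mulVec x = b)
    (p : Fin m → ℝ) (hp : ∀ i, 0 < p i) (hpsum : ∑ i, p i = 1)
    (Ω : Type) [MeasurableSpace Ω] (μ : Measure Ω) [IsProbabilityMeasure μ]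
    (ξ : ℕ → Ω → Fin m) (hmeas : ∀ k, Measurable (ξ k))
    (hindep : ProbabilityTheory.iIndepFun ξ μ)
    (hdist : ∀ (k : ℕ) (i : Fin m), μ {ω | ξ k ω = i} = ENNReal.ofReal (p i))
    (x0 : EuclideanSpace ℝ (Fin n))
    (X : ℕ → Ω → EuclideanSpace ℝ (Fin n))
    (hX0 : ∀ ω, X 0 ω = x0)
    (hXstep : ∀ (k : ℕ) (ω : Ω), X (k + 1) ω = X k ω +
      ((b (ξ k ω) - ⟪A.rowE (ξ k ω), X k ω⟫_ℝ) / ‖A.rowE (ξ k ω)‖ ^ 2) • A.rowE (ξ k ω))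
    (xstar : EuclideanSpace ℝ (Fin n))
    (hxstar : A.mulVec xstar = b)
    (hxorth : ∀ z : EuclideanSpace ℝ (Fin n), A.mulVec z = 0 → ⟪z, xstar - x0⟫_ℝ = 0)
    (lammin : ℝ)
    (hlam : IsLeast {r : ℝ | ∃ s : EuclideanSpace ℝ (Fin n), ‖s‖ = 1 ∧
      (∀ z : EuclideanSpace ℝ (Fin n), A.mulVec z = 0 → ⟪z, s⟫_ℝ = 0) ∧
      r = ∑ i, p i * ⟪A.nrowE i, s⟫_ℝ ^ 2} lammin)
    (hlam01 : lammin ∈ Set.Ioo (0 : ℝ) 1) :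
    ∀ᵐ ω ∂μ, Filter.Tendsto (fun k => X k ω) Filter.atTop (nhds xstar) :=
  randomized_kaczmarz_almost_sure_convergence_general m n A b hrows p hp hpsum Ω μ ξ hmeas hindep
    hdist x0 X hX0 hXstep xstar hxstar hxorth lammin hlam hlam01
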